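/- arXiv:2402.10665 — 5 statements merged into one kernel-verified Lean document; each statement's English description precedes it below -/
import Mathlib

section
/- Let c > 0, s > 0, and k ≥ 1 with μ = s/k ∈ [0,1]. Then E[1/(c+W)] ≤ E[1/(c+Z)], where W ~ Binomial(k, μ) and Z ~ Poisson(s), with equality only in the limit k → ∞. -/
open MeasureTheory Set intervalIntegral

private lemma meas_rpow (r : ℝ) : Measurable fun x : ℝ => x ^ r := by measurability

private lemma integ_rpow_Ioc (r : ℝ) (hr : 0 < r) :
    ∫ t in Set.Ioc (0:ℝ) 1, t ^ (r - 1) = 1 / r := by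
  rw [← intervalIntegral.integral_of_le (by norm_num : (0:ℝ) ≤ 1),
    integral_rpow (Or.inl (by linarith)), sub_add_cancel, Real.one_rpow,
    Real.zero_rpow hr.ne']
  ring

private lemma integrableOn_rpow_Ioc (r : ℝ) (hr : 0 < r) :
    IntegrableOn (fun t : ℝ => t ^ (r - 1)) (Set.Ioc (0:ℝ) 1) := by
  have := intervalIntegral.intervalIntegrable_rpow' (a := 0) (b := 1) (r := r - 1) (by linarith)
  rwa [intervalIntegrable_iff_integrableOn_Ioc_of_le (by norm_num)] at this

private lemma integ_term (r a : ℝ) (hr : 0 < r) :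
    ∫ t in Set.Ioc (0:ℝ) 1, a * t ^ (r - 1) = a / r := by
  rw [MeasureTheory.integral_const_mul, integ_rpow_Ioc r hr]
  ring

/-- Corollary 1: for finite `k`, the binomial expectation `E[1/(c+W)]`, `W ~ Bin(k, s/k)`,
is strictly below the Poisson expectation `E[1/(c+Z)]`, `Z ~ Poisson(s)` (equality only in
the limit `k → ∞`). -/
theorem binomial_inv_expectation_lt_poisson
    (c s : ℝ) (hc : 0 < c) (hs : 0 < s) (k : ℕ) (hk : 1 ≤ k)
    (μ : ℝ) (hμ : μ = s / k) (hμ1 : μ ∈ Set.Icc (0:ℝ) 1) :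
    ∑ i ∈ Finset.range (k+1), (k.choose i : ℝ) * μ^i * (1-μ)^(k-i) / (c + i)
      < ∑' i : ℕ, s^i * Real.exp (-s) / (Nat.factorial i) / (c + i) := by
  obtain ⟨hμ0, hμle⟩ := hμ1
  have hkpos : (0:ℝ) < k := by exact_mod_cast Nat.lt_of_lt_of_le Nat.zero_lt_one hk
  have hμpos : 0 < μ := by rw [hμ]; positivity
  have hci : ∀ i : ℕ, (0:ℝ) < c + i := fun i => by positivity
  set f : ℝ → ℝ := fun t => t ^ (c - 1) * (μ * t + (1 - μ)) ^ k with hfdef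
  set g : ℝ → ℝ := fun t => t ^ (c - 1) * Real.exp (-(s * (1 - t))) with hgdef
  -- Step A: binomial side equals ∫ f
  have hA : ∑ i ∈ Finset.range (k+1), (k.choose i : ℝ) * μ^i * (1-μ)^(k-i) / (c + i)
      = ∫ t in Set.Ioc (0:ℝ) 1, f t := by
    have h1 : ∀ i ∈ Finset.range (k+1),
        (k.choose i : ℝ) * μ^i * (1-μ)^(k-i) / (c + i)
        = ∫ t in Set.Ioc (0:ℝ) 1, ((k.choose i : ℝ) * μ^i * (1-μ)^(k-i)) * t ^ ((c + i) - 1) :=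
      fun i _ => (integ_term _ _ (hci i)).symm
    rw [Finset.sum_congr rfl h1, ← MeasureTheory.integral_finset_sum]
    · apply MeasureTheory.setIntegral_congr_fun measurableSet_Ioc
      intro t ht
      have ht0 : 0 < t := ht.1
      have htpow : ∀ i : ℕ, t ^ ((c + i) - 1) = t ^ (c - 1) * t ^ i := by
        intro i
        have h2 : (c + i) - 1 = (c - 1) + (i:ℝ) := by ring
        rw [h2, Real.rpow_add ht0, Real.rpow_natCast]
      simp only [htpow]
      show _ = f t
      rw [hfdef]
      simp only
      rw [add_pow, Finset.mul_sum]
      apply Finset.sum_congr rfl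
      intro i _
      rw [mul_pow]
      ring
    · intro i _
      exact (integrableOn_rpow_Ioc _ (hci i)).const_mul _
  -- Step B: Poisson side equals ∫ g
  set P : ℕ → ℝ := fun i => s ^ i * Real.exp (-s) / (Nat.factorial i) with hPdef
  have hP0 : ∀ i, 0 ≤ P i := fun i => by positivity
  set F : ℕ → ℝ → ℝ := fun i t => P i * t ^ ((c + i) - 1) with hFdef
  have hFint : ∀ i : ℕ, Integrable (F i) (volume.restrict (Set.Ioc (0:ℝ) 1)) :=
    fun i => (integrableOn_rpow_Ioc _ (hci i)).const_mul _
  have hFmeas : ∀ i : ℕ, AEStronglyMeasurable (F i) (volume.restrict (Set.Ioc (0:ℝ) 1)) :=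
    fun i => (hFint i).aestronglyMeasurable
  have hFnn : ∀ i : ℕ, 0 ≤ᵐ[volume.restrict (Set.Ioc (0:ℝ) 1)] F i := by
    intro i
    filter_upwards [ae_restrict_mem measurableSet_Ioc] with t ht
    have : (0:ℝ) ≤ t := ht.1.le
    positivity
  have hPsum : Summable (fun i : ℕ => P i / c) := by
    have h : (fun i : ℕ => P i / c)
        = fun i : ℕ => (s^i / (Nat.factorial i)) * (Real.exp (-s) / c) := by
      funext i
      simp only [hPdef]
      ring
    rw [h]
    exact (Real.summable_pow_div_factorial s).mul_right _
  have hkey : ∑' i : ℕ, ∫⁻ t, ‖F i t‖₊ ∂(volume.restrict (Set.Ioc (0:ℝ) 1)) ≠ ⊤ := by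
    have hnorm : ∀ i : ℕ, ∫⁻ t, ‖F i t‖₊ ∂(volume.restrict (Set.Ioc (0:ℝ) 1))
        = ENNReal.ofReal (P i / (c + i)) := by
      intro i
      simp only [← enorm_eq_nnnorm]
      rw [← ofReal_integral_norm_eq_lintegral_enorm (hFint i)]
      congr 1
      rw [integral_congr_ae ((hFnn i).mono fun t h => Real.norm_of_nonneg h)]
      exact integ_term _ _ (hci i)
    apply ne_of_lt
    calc ∑' i : ℕ, ∫⁻ t, ‖F i t‖₊ ∂(volume.restrict (Set.Ioc (0:ℝ) 1))
        = ∑' i : ℕ, ENNReal.ofReal (P i / (c + i)) := by simp_rw [hnorm]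
      _ ≤ ∑' i : ℕ, ENNReal.ofReal (P i / c) := by
          apply ENNReal.tsum_le_tsum
          intro i
          apply ENNReal.ofReal_le_ofReal
          exact div_le_div_of_nonneg_left (hP0 i) hc (le_add_of_nonneg_right (Nat.cast_nonneg i))
      _ = ENNReal.ofReal (∑' i : ℕ, P i / c) :=
          (ENNReal.ofReal_tsum_of_nonneg (fun i => by positivity) hPsum).symm
      _ < ⊤ := ENNReal.ofReal_lt_top
  have hswap := MeasureTheory.integral_tsum hFmeas hkey
  have hterm : ∀ i : ℕ, ∫ t, F i t ∂(volume.restrict (Set.Ioc (0:ℝ) 1)) = P i / (c + i) :=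
    fun i => integ_term _ _ (hci i)
  have hB : (∑' i : ℕ, s^i * Real.exp (-s) / (Nat.factorial i) / (c + i))
      = ∫ t in Set.Ioc (0:ℝ) 1, g t := by
    have hRHS : (∑' i : ℕ, s^i * Real.exp (-s) / (Nat.factorial i) / (c + i))
        = ∫ t in Set.Ioc (0:ℝ) 1, (∑' i : ℕ, F i t) := by
      rw [hswap]
      exact tsum_congr fun i => (hterm i).symm
    rw [hRHS]
    apply MeasureTheory.setIntegral_congr_fun measurableSet_Ioc
    intro t ht
    have ht0 : 0 < t := ht.1
    have htpow : ∀ i : ℕ, t ^ ((c + i) - 1) = t ^ (c - 1) * t ^ i := by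
      intro i
      have h2 : (c + i) - 1 = (c - 1) + (i:ℝ) := by ring
      rw [h2, Real.rpow_add ht0, Real.rpow_natCast]
    have hsum : (∑' i : ℕ, F i t)
        = (t ^ (c-1) * Real.exp (-s)) * ∑' i : ℕ, (s*t) ^ i / (Nat.factorial i) := by
      rw [← tsum_mul_left]
      apply tsum_congr
      intro i
      simp only [hFdef, hPdef, htpow i, mul_pow]
      ring
    show (∑' i : ℕ, F i t) = g t
    rw [hsum]
    have hexp : (∑' i : ℕ, (s*t) ^ i / (Nat.factorial i)) = Real.exp (s*t) := by
      rw [Real.exp_eq_exp_ℝ, NormedSpace.exp_eq_tsum_div]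
    rw [hgdef]
    simp only
    rw [hexp, mul_assoc, ← Real.exp_add]
    congr 1
    ring
  -- Step C: strict inequality of the integrals
  rw [hA, hB]
  -- integrability of f and g
  have hrpow_int := integrableOn_rpow_Ioc c hc
  have hfmeas : AEStronglyMeasurable f (volume.restrict (Set.Ioc (0:ℝ) 1)) := by
    apply Measurable.aestronglyMeasurable
    rw [hfdef]
    exact (meas_rpow (c-1)).mul
      (((measurable_const.mul measurable_id).add measurable_const).pow_const k)
  have hgmeas : AEStronglyMeasurable g (volume.restrict (Set.Ioc (0:ℝ) 1)) := by
    apply Measurable.aestronglyMeasurable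
    rw [hgdef]
    exact (meas_rpow (c-1)).mul
      (Real.measurable_exp.comp ((measurable_const.mul (measurable_const.sub measurable_id)).neg))
  have hbase : ∀ t ∈ Set.Ioc (0:ℝ) 1, 0 ≤ μ * t + (1 - μ) ∧ μ * t + (1 - μ) ≤ 1 := by
    intro t ht
    constructor
    · nlinarith [ht.1, ht.2]
    · nlinarith [ht.1, ht.2]
  have hfint : Integrable f (volume.restrict (Set.Ioc (0:ℝ) 1)) := by
    apply Integrable.mono hrpow_int hfmeas
    filter_upwards [ae_restrict_mem measurableSet_Ioc] with t ht
    have ht0 : 0 < t := ht.1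
    obtain ⟨hb0, hb1⟩ := hbase t ht
    show ‖t ^ (c - 1) * (μ * t + (1 - μ)) ^ k‖ ≤ ‖t ^ (c - 1)‖
    rw [Real.norm_of_nonneg (mul_nonneg (Real.rpow_nonneg ht0.le _) (pow_nonneg hb0 k)),
      Real.norm_of_nonneg (Real.rpow_nonneg ht0.le _)]
    exact mul_le_of_le_one_right (Real.rpow_nonneg ht0.le _) (pow_le_one₀ hb0 hb1)
  have hgint : Integrable g (volume.restrict (Set.Ioc (0:ℝ) 1)) := by
    apply Integrable.mono hrpow_int hgmeas
    filter_upwards [ae_restrict_mem measurableSet_Ioc] with t ht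
    have ht0 : 0 < t := ht.1
    have hexp1 : Real.exp (-(s * (1 - t))) ≤ 1 := by
      apply Real.exp_le_one_iff.mpr
      nlinarith [ht.2]
    have hexp0 : 0 < Real.exp (-(s * (1 - t))) := Real.exp_pos _
    show ‖t ^ (c - 1) * Real.exp (-(s * (1 - t)))‖ ≤ ‖t ^ (c - 1)‖
    rw [Real.norm_of_nonneg (mul_nonneg (Real.rpow_nonneg ht0.le _) hexp0.le),
      Real.norm_of_nonneg (Real.rpow_nonneg ht0.le _)]
    exact mul_le_of_le_one_right (Real.rpow_nonneg ht0.le _) hexp1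
  -- pointwise: f ≤ g on Ioc, strictly on Ioo
  have hks : (k:ℝ) * μ = s := by
    rw [hμ]
    field_simp
  have hle : ∀ t ∈ Set.Ioc (0:ℝ) 1, f t ≤ g t := by
    intro t ht
    obtain ⟨hb0, _⟩ := hbase t ht
    have h1 : μ * t + (1 - μ) = 1 + (-(μ * (1 - t))) := by ring
    have h2 : μ * t + (1 - μ) ≤ Real.exp (-(μ * (1 - t))) := by
      rw [h1]
      rw [add_comm]
      exact Real.add_one_le_exp _
    have h3 : (μ * t + (1 - μ)) ^ k ≤ Real.exp (-(μ * (1 - t))) ^ k :=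
      pow_le_pow_left₀ hb0 h2 k
    have h4 : Real.exp (-(μ * (1 - t))) ^ k = Real.exp (-(s * (1 - t))) := by
      rw [← Real.exp_nat_mul]
      congr 1
      rw [← hks]
      ring
    rw [h4] at h3
    exact mul_le_mul_of_nonneg_left h3 (Real.rpow_nonneg ht.1.le _)
  have hlt : ∀ t ∈ Set.Ioo (0:ℝ) 1, f t < g t := by
    intro t ht
    obtain ⟨hb0, _⟩ := hbase t (Set.Ioo_subset_Ioc_self ht)
    have hu : 0 < μ * (1 - t) := by nlinarith [ht.2, hμpos]
    have h2 : μ * t + (1 - μ) < Real.exp (-(μ * (1 - t))) := by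
      have := Real.add_one_lt_exp (x := -(μ * (1 - t))) (by linarith)
      linarith
    have h3 : (μ * t + (1 - μ)) ^ k < Real.exp (-(μ * (1 - t))) ^ k :=
      pow_lt_pow_left₀ h2 hb0 (by omega)
    have h4 : Real.exp (-(μ * (1 - t))) ^ k = Real.exp (-(s * (1 - t))) := by
      rw [← Real.exp_nat_mul]
      congr 1
      rw [← hks]
      ring
    rw [h4] at h3
    exact mul_lt_mul_of_pos_left h3 (Real.rpow_pos_of_pos ht.1 _)
  -- conclude via positivity of ∫ (g - f)
  have hsubint : Integrable (fun t => g t - f t) (volume.restrict (Set.Ioc (0:ℝ) 1)) :=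
    hgint.sub hfint
  have hpos : 0 < ∫ t in Set.Ioc (0:ℝ) 1, (g t - f t) := by
    rw [integral_pos_iff_support_of_nonneg_ae ?hnn hsubint]
    case hnn =>
      filter_upwards [ae_restrict_mem measurableSet_Ioc] with t ht
      exact sub_nonneg.mpr (hle t ht)
    have hsub : Set.Ioo (0:ℝ) 1 ⊆ Function.support (fun t => g t - f t) := by
      intro t ht
      exact ne_of_gt (sub_pos.mpr (hlt t ht))
    calc (0:ENNReal) < volume.restrict (Set.Ioc (0:ℝ) 1) (Set.Ioo 0 1) := by
          rw [Measure.restrict_apply' measurableSet_Ioc]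
          rw [Set.inter_eq_self_of_subset_left Set.Ioo_subset_Ioc_self]
          simp [Real.volume_Ioo]
      _ ≤ volume.restrict (Set.Ioc (0:ℝ) 1) (Function.support (fun t => g t - f t)) :=
          measure_mono hsub
  have := MeasureTheory.integral_sub hgint hfint
  rw [this] at hpos
  linarith
end

section
/- Let p ∈ [0,1]^n, 1 ≤ k ≤ n, μ = (1/k)Σ_{i=1}^{k} pᵢ, λ = Σ_{i=k+1}^{n} pᵢ. Let Y₁,...,Yₙ be independent Bernoulli(pᵢ) and set W₁ = Σ_{j≤k} Yⱼ, W₀ = Σ_{j>k} Yⱼ. Then E[2W₁/(k + W₁ + W₀)] ≥ 2kμ/(k + 1 + (k−1)μ + λ). -/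
noncomputable def ib (b : Bool) : ℝ := if b then 1 else 0

lemma ib_nonneg (b : Bool) : 0 ≤ ib b := by cases b <;> simp [ib]

lemma ib_sq (b : Bool) : ib b * ib b = ib b := by cases b <;> simp [ib]

lemma sum_prod_bool {n : ℕ} (g : Fin n → Bool → ℝ) :
    ∑ y : Fin n → Bool, ∏ i, g i (y i) = ∏ i, (g i false + g i true) := by
  classical
  have h : ∀ i : Fin n, g i false + g i true = ∑ b : Bool, g i b := by
    intro i; simp [add_comm]
  simp_rw [h]
  rw [Finset.prod_univ_sum]
  apply Finset.sum_congr
  · ext y; simp [Fintype.mem_piFinset]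
  · intros; rfl

lemma moment_one {n : ℕ} (w : Fin n → Bool → ℝ) (hw : ∀ i, w i false + w i true = 1)
    (i : Fin n) :
    ∑ y : Fin n → Bool, (∏ m, w m (y m)) * ib (y i) = w i true := by
  classical
  have h1 : ∀ y : Fin n → Bool, (∏ m, w m (y m)) * ib (y i)
      = ∏ m, (fun m b => w m b * (if m = i then ib b else 1)) m (y m) := by
    intro y
    simp only
    rw [Finset.prod_mul_distrib, Finset.prod_ite_eq' Finset.univ i (fun m => ib (y m))]
    simp
  rw [Finset.sum_congr rfl (fun y _ => h1 y),
    sum_prod_bool (fun m b => w m b * (if m = i then ib b else 1))]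
  have h2 : ∀ m : Fin n, (w m false * (if m = i then ib false else 1)
      + w m true * (if m = i then ib true else 1)) = if m = i then w i true else 1 := by
    intro m; by_cases h : m = i <;> simp [h, ib, hw m]
  rw [Finset.prod_congr rfl (fun m _ => h2 m)]
  rw [Finset.prod_ite_eq' Finset.univ i (fun _ => w i true)]
  simp

lemma moment_two {n : ℕ} (w : Fin n → Bool → ℝ) (hw : ∀ i, w i false + w i true = 1)
    (i j : Fin n) (hij : i ≠ j) :
    ∑ y : Fin n → Bool, (∏ m, w m (y m)) * (ib (y i) * ib (y j)) = w i true * w j true := by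
  classical
  have h1 : ∀ y : Fin n → Bool, (∏ m, w m (y m)) * (ib (y i) * ib (y j))
      = ∏ m, (fun m b => w m b * ((if m = i then ib b else 1) * (if m = j then ib b else 1))) m (y m) := by
    intro y
    simp only
    rw [Finset.prod_mul_distrib, Finset.prod_mul_distrib,
      Finset.prod_ite_eq' Finset.univ i (fun m => ib (y m)),
      Finset.prod_ite_eq' Finset.univ j (fun m => ib (y m))]
    simp
  rw [Finset.sum_congr rfl (fun y _ => h1 y),
    sum_prod_bool (fun m b => w m b * ((if m = i then ib b else 1) * (if m = j then ib b else 1)))]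
  have h2 : ∀ m : Fin n, (w m false * ((if m = i then ib false else 1) * (if m = j then ib false else 1))
      + w m true * ((if m = i then ib true else 1) * (if m = j then ib true else 1)))
      = (if m = i then w i true else 1) * (if m = j then w j true else 1) := by
    intro m
    by_cases h : m = i
    · have hj : m ≠ j := by rw [h]; exact hij
      have : ¬ (i = j) := hij
      simp [h, hj, ib, this]
    · by_cases h' : m = j
      · have : ¬ (j = i) := fun e => hij e.symm
        simp [h, h', ib, this]
      · simp [h, h', ib, hw m]
  rw [Finset.prod_congr rfl (fun m _ => h2 m), Finset.prod_mul_distrib,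
    Finset.prod_ite_eq' Finset.univ i (fun _ => w i true),
    Finset.prod_ite_eq' Finset.univ j (fun _ => w j true)]
  simp

/-- Expectation of `∑_{j∈s} Y j`. -/
lemma exp_sum {n : ℕ} (w : Fin n → Bool → ℝ) (hw : ∀ i, w i false + w i true = 1)
    (s : Finset (Fin n)) :
    ∑ y : Fin n → Bool, (∏ m, w m (y m)) * (∑ j ∈ s, ib (y j)) = ∑ j ∈ s, w j true := by
  simp_rw [Finset.mul_sum]
  rw [Finset.sum_comm]
  exact Finset.sum_congr rfl (fun j _ => moment_one w hw j)

/-- Expectation of `(∑_{i∈s} Y i)(∑_{j∈t} Y j)`. -/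
lemma exp_sum_mul {n : ℕ} (w : Fin n → Bool → ℝ) (hw : ∀ i, w i false + w i true = 1)
    (s t : Finset (Fin n)) :
    ∑ y : Fin n → Bool, (∏ m, w m (y m)) * ((∑ i ∈ s, ib (y i)) * (∑ j ∈ t, ib (y j)))
      = ∑ i ∈ s, ∑ j ∈ t, (if i = j then w i true else w i true * w j true) := by
  classical
  simp_rw [Finset.sum_mul_sum, Finset.mul_sum]
  rw [Finset.sum_comm]
  refine Finset.sum_congr rfl (fun i _ => ?_)
  rw [Finset.sum_comm]
  refine Finset.sum_congr rfl (fun j _ => ?_)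
  by_cases h : i = j
  · subst h
    simp only [if_pos rfl]
    simp_rw [ib_sq]
    exact moment_one w hw i
  · rw [if_neg h]
    exact moment_two w hw i j h

/-- Lemma 2 (lower bound on the ideal Dice confidence): for independent Bernoulli
`Y i ~ Bernoulli(p i)`, `W₁ = ∑_{j<k} Y j`, `W₀ = ∑_{j≥k} Y j`,
`E[2W₁/(k+W₁+W₀)] ≥ 2kμ/(k+1+(k-1)μ+λ)`. -/
theorem idc_lower_bound
    (n k : ℕ) (hk1 : 1 ≤ k) (hkn : k ≤ n) (p : Fin n → ℝ)
    (hp : ∀ i, p i ∈ Set.Icc (0:ℝ) 1) (μ lam : ℝ)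
    (hμ : μ = (1/(k:ℝ)) * ∑ i ∈ Finset.univ.filter (fun i : Fin n => (i:ℕ) < k), p i)
    (hlam : lam = ∑ i ∈ Finset.univ.filter (fun i : Fin n => k ≤ (i:ℕ)), p i) :
    ∑ y : Fin n → Bool,
        (∏ i, (if y i then p i else 1 - p i)) *
          (2 * (∑ j ∈ Finset.univ.filter (fun j : Fin n => (j:ℕ) < k ∧ y j = true), (1:ℝ)) /
            ((k:ℝ) + (∑ j ∈ Finset.univ.filter (fun j : Fin n => (j:ℕ) < k ∧ y j = true), (1:ℝ))
              + (∑ j ∈ Finset.univ.filter (fun j : Fin n => k ≤ (j:ℕ) ∧ y j = true), (1:ℝ))))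
      ≥ 2*(k:ℝ)*μ / ((k:ℝ) + 1 + ((k:ℝ)-1)*μ + lam) := by
  classical
  have hk0 : (0:ℝ) < k := by exact_mod_cast hk1
  have hk1' : (1:ℝ) ≤ k := by exact_mod_cast hk1
  set S : Finset (Fin n) := Finset.univ.filter (fun i : Fin n => (i:ℕ) < k) with hSdef
  set T : Finset (Fin n) := Finset.univ.filter (fun i : Fin n => k ≤ (i:ℕ)) with hTdef
  set w : Fin n → Bool → ℝ := fun i b => if b then p i else 1 - p i with hwdef
  have hw : ∀ i, w i false + w i true = 1 := by intro i; simp [hwdef]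
  have hwt : ∀ i, w i true = p i := by intro i; simp [hwdef]
  have hwnn : ∀ i b, 0 ≤ w i b := by
    intro i b
    cases b
    · simpa [hwdef] using (hp i).2
    · simpa [hwdef] using (hp i).1
  have hprob : ∀ y : Fin n → Bool, 0 ≤ ∏ m, w m (y m) :=
    fun y => Finset.prod_nonneg (fun m _ => hwnn m (y m))
  set P1 : ℝ := ∑ i ∈ S, p i with hP1def
  set Q : ℝ := ∑ i ∈ S, (p i)^2 with hQdef
  set A : ℝ := (k:ℝ) + 1 + ((k:ℝ)-1)*μ + lam with hAdef
  have hμ0 : 0 ≤ μ := by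
    rw [hμ]
    have : 0 ≤ ∑ i ∈ S, p i := Finset.sum_nonneg (fun i _ => (hp i).1)
    positivity
  have hlam0 : 0 ≤ lam := hlam ▸ Finset.sum_nonneg (fun i _ => (hp i).1)
  have hA : 0 < A := by
    rw [hAdef]
    nlinarith [mul_nonneg (by linarith : (0:ℝ) ≤ (k:ℝ)-1) hμ0]
  -- rewriting the inner counting sums
  have hfilt1 : ∀ y : Fin n → Bool,
      (∑ j ∈ Finset.univ.filter (fun j : Fin n => (j:ℕ) < k ∧ y j = true), (1:ℝ))
        = ∑ j ∈ S, ib (y j) := by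
    intro y
    rw [← Finset.filter_filter, Finset.sum_filter]
    exact Finset.sum_congr rfl (fun j _ => by by_cases h : y j <;> simp [h, ib])
  have hfilt0 : ∀ y : Fin n → Bool,
      (∑ j ∈ Finset.univ.filter (fun j : Fin n => k ≤ (j:ℕ) ∧ y j = true), (1:ℝ))
        = ∑ j ∈ T, ib (y j) := by
    intro y
    rw [← Finset.filter_filter, Finset.sum_filter]
    exact Finset.sum_congr rfl (fun j _ => by by_cases h : y j <;> simp [h, ib])
  have hW1nn : ∀ y : Fin n → Bool, 0 ≤ ∑ j ∈ S, ib (y j) :=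
    fun y => Finset.sum_nonneg (fun j _ => ib_nonneg (y j))
  have hW0nn : ∀ y : Fin n → Bool, 0 ≤ ∑ j ∈ T, ib (y j) :=
    fun y => Finset.sum_nonneg (fun j _ => ib_nonneg (y j))
  -- moments
  have E1 : ∑ y : Fin n → Bool, (∏ m, w m (y m)) * (∑ j ∈ S, ib (y j)) = P1 := by
    rw [exp_sum w hw S]
    exact Finset.sum_congr rfl (fun j _ => hwt j)
  have E3 : ∑ y : Fin n → Bool,
      (∏ m, w m (y m)) * ((∑ i ∈ S, ib (y i)) * (∑ j ∈ T, ib (y j))) = P1 * lam := by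
    rw [exp_sum_mul w hw S T]
    have : ∀ i ∈ S, ∀ j ∈ T, (if i = j then w i true else w i true * w j true) = p i * p j := by
      intro i hi j hj
      have hij : i ≠ j := by
        intro h
        rw [hSdef, Finset.mem_filter] at hi
        rw [hTdef, Finset.mem_filter] at hj
        subst h
        omega
      rw [if_neg hij, hwt, hwt]
    rw [Finset.sum_congr rfl (fun i hi => Finset.sum_congr rfl (fun j hj => this i hi j hj))]
    rw [hlam, hP1def]
    exact (Finset.sum_mul_sum _ _ _ _).symm
  have E2 : ∑ y : Fin n → Bool,
      (∏ m, w m (y m)) * ((∑ i ∈ S, ib (y i)) * (∑ j ∈ S, ib (y j)))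
        = P1 + P1^2 - Q := by
    rw [exp_sum_mul w hw S S]
    have step : ∀ i ∈ S, (∑ j ∈ S, if i = j then w i true else w i true * w j true)
        = p i * P1 + (p i - (p i)^2) := by
      intro i hi
      have h1 : ∀ j ∈ S, (if i = j then w i true else w i true * w j true)
          = p i * p j + (if i = j then p i - (p i)^2 else 0) := by
        intro j hj
        by_cases h : i = j
        · subst h; rw [if_pos rfl, if_pos rfl, hwt]; ring
        · rw [if_neg h, if_neg h, hwt, hwt]; ring
      rw [Finset.sum_congr rfl h1, Finset.sum_add_distrib, ← Finset.mul_sum,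
        Finset.sum_ite_eq S i (fun _ => p i - (p i)^2), if_pos hi, hP1def]
    rw [Finset.sum_congr rfl step, Finset.sum_add_distrib, ← Finset.sum_mul]
    rw [Finset.sum_sub_distrib]
    rw [← hP1def, ← hQdef]
    ring
  -- the expected value of the linear lower bound
  have Esum : ∑ y : Fin n → Bool,
      (∏ m, w m (y m)) * ((2/A^2) * ((∑ j ∈ S, ib (y j)) *
        (2*A - ((k:ℝ) + (∑ j ∈ S, ib (y j)) + (∑ j ∈ T, ib (y j))))))
      = (2/A^2) * ((2*A - (k:ℝ)) * P1 - (P1 + P1^2 - Q) - P1 * lam) := by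
    have expand : ∀ y : Fin n → Bool,
        (∏ m, w m (y m)) * ((2/A^2) * ((∑ j ∈ S, ib (y j)) *
          (2*A - ((k:ℝ) + (∑ j ∈ S, ib (y j)) + (∑ j ∈ T, ib (y j))))))
        = (2/A^2) * ((2*A - (k:ℝ)) * ((∏ m, w m (y m)) * (∑ j ∈ S, ib (y j)))
            - (∏ m, w m (y m)) * ((∑ i ∈ S, ib (y i)) * (∑ j ∈ S, ib (y j)))
            - (∏ m, w m (y m)) * ((∑ i ∈ S, ib (y i)) * (∑ j ∈ T, ib (y j)))) := by
      intro y; ring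
    rw [Finset.sum_congr rfl (fun y _ => expand y), ← Finset.mul_sum]
    congr 1
    rw [Finset.sum_sub_distrib, Finset.sum_sub_distrib, ← Finset.mul_sum, E1, E2, E3]
  -- pointwise bound
  have hpt : ∀ y : Fin n → Bool,
      (∏ m, w m (y m)) * ((2/A^2) * ((∑ j ∈ S, ib (y j)) *
        (2*A - ((k:ℝ) + (∑ j ∈ S, ib (y j)) + (∑ j ∈ T, ib (y j))))))
      ≤ (∏ m, w m (y m)) * (2 * (∑ j ∈ S, ib (y j)) /
          ((k:ℝ) + (∑ j ∈ S, ib (y j)) + (∑ j ∈ T, ib (y j)))) := by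
    intro y
    apply mul_le_mul_of_nonneg_left _ (hprob y)
    have h1 := hW1nn y
    have h0 := hW0nn y
    have hu : 0 < (k:ℝ) + (∑ j ∈ S, ib (y j)) + (∑ j ∈ T, ib (y j)) := by linarith
    rw [← sub_nonneg]
    have hid : 2 * (∑ j ∈ S, ib (y j)) /
          ((k:ℝ) + (∑ j ∈ S, ib (y j)) + (∑ j ∈ T, ib (y j)))
        - (2/A^2) * ((∑ j ∈ S, ib (y j)) *
          (2*A - ((k:ℝ) + (∑ j ∈ S, ib (y j)) + (∑ j ∈ T, ib (y j)))))
        = 2 * (∑ j ∈ S, ib (y j)) *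
            (A - ((k:ℝ) + (∑ j ∈ S, ib (y j)) + (∑ j ∈ T, ib (y j))))^2 /
            (((k:ℝ) + (∑ j ∈ S, ib (y j)) + (∑ j ∈ T, ib (y j))) * A^2) := by
      field_simp
      ring
    rw [hid]
    positivity
  -- cardinality of S and Cauchy-Schwarz
  have hcard : S.card = k := by
    have h : S = Finset.map (Fin.castLEOrderEmb hkn).toEmbedding Finset.univ := by
      ext i
      simp only [hSdef, Finset.mem_filter, Finset.mem_univ, true_and, Finset.mem_map,
        Fin.castLEOrderEmb_apply]
      constructor
      · intro hi; exact ⟨⟨(i:ℕ), hi⟩, by ext; rfl⟩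
      · rintro ⟨a, rfl⟩; exact a.isLt
    rw [h, Finset.card_map, Finset.card_univ, Fintype.card_fin]
  have hP1 : P1 = (k:ℝ) * μ := by
    rw [hμ]
    field_simp
  have hCS : (k:ℝ) * μ^2 ≤ Q := by
    have h := sq_sum_le_card_mul_sum_sq (s := S) (f := p)
    rw [hcard] at h
    rw [← hP1def, ← hQdef, hP1] at h
    push_cast at h
    nlinarith
  -- final arithmetic
  have final : 2*(k:ℝ)*μ / A ≤ (2/A^2) * ((2*A - (k:ℝ)) * P1 - (P1 + P1^2 - Q) - P1 * lam) := by
    rw [hP1, ← sub_nonneg]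
    have hid2 : (2/A^2) * ((2*A - (k:ℝ)) * ((k:ℝ)*μ) - (((k:ℝ)*μ) + ((k:ℝ)*μ)^2 - Q)
          - ((k:ℝ)*μ) * lam) - 2*(k:ℝ)*μ / A
        = 2*(Q - (k:ℝ)*μ^2)/A^2 := by
      rw [hAdef]
      have hA' : ((k:ℝ) + 1 + ((k:ℝ)-1)*μ + lam) ≠ 0 := by rw [← hAdef]; exact ne_of_gt hA
      field_simp
      ring
    rw [hid2]
    apply div_nonneg _ (by positivity)
    linarith
  -- put everything together
  rw [ge_iff_le]
  calc 2*(k:ℝ)*μ / A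
      ≤ (2/A^2) * ((2*A - (k:ℝ)) * P1 - (P1 + P1^2 - Q) - P1 * lam) := final
    _ = ∑ y : Fin n → Bool,
        (∏ m, w m (y m)) * ((2/A^2) * ((∑ j ∈ S, ib (y j)) *
          (2*A - ((k:ℝ) + (∑ j ∈ S, ib (y j)) + (∑ j ∈ T, ib (y j)))))) := Esum.symm
    _ ≤ ∑ y : Fin n → Bool,
        (∏ m, w m (y m)) * (2 * (∑ j ∈ S, ib (y j)) /
          ((k:ℝ) + (∑ j ∈ S, ib (y j)) + (∑ j ∈ T, ib (y j)))) :=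
        Finset.sum_le_sum (fun y _ => hpt y)
    _ = _ := by
        refine Finset.sum_congr rfl (fun y _ => ?_)
        rw [hfilt1 y, hfilt0 y]
end

section
/- Let p ∈ [0,1]^n, 1 ≤ k ≤ n, μ = (1/k)Σ_{i=1}^{k} pᵢ, λ = Σ_{i=k+1}^{n} pᵢ. Let Y₁,...,Yₙ be independent Bernoulli(pᵢ), W₁ = Σ_{j≤k} Yⱼ, W₀ = Σ_{j>k} Yⱼ. Then E[2W₁/(k + W₁ + W₀)] ≤ Σ_{i=0}^{∞} (λⁱe^{−λ}/i!) · 2kμ/(k + kμ + i). -/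
open Finset

noncomputable def pois (t : ℝ) (i : ℕ) : ℝ := t^i * Real.exp (-t) / i.factorial

lemma pois_nonneg {t : ℝ} (ht : 0 ≤ t) (i : ℕ) : 0 ≤ pois t i := by
  unfold pois; positivity

lemma summable_pois (t : ℝ) : Summable (pois t) := by
  have h := (Real.summable_pow_div_factorial t).mul_right (Real.exp (-t))
  refine h.congr fun i => ?_
  unfold pois; ring

lemma summable_mul_pois (t : ℝ) : Summable (fun i : ℕ => (i:ℝ) * pois t i) := by
  rw [← summable_nat_add_iff 1]
  have h := (summable_pois t).mul_left t
  refine h.congr fun i => ?_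
  unfold pois
  rw [Nat.factorial_succ]
  push_cast
  field_simp
  ring

lemma tsum_pois {t : ℝ} : ∑' i, pois t i = 1 := by
  have h : ∑' i : ℕ, t^i / i.factorial = Real.exp t := by
    rw [Real.exp_eq_exp_ℝ, NormedSpace.exp_eq_tsum_div]
  calc ∑' i, pois t i = (∑' i : ℕ, t^i / i.factorial) * Real.exp (-t) := by
        rw [← tsum_mul_right]; exact tsum_congr fun i => by unfold pois; ring
    _ = 1 := by rw [h, ← Real.exp_add]; simp

lemma tsum_mul_pois {t : ℝ} : ∑' i : ℕ, (i:ℝ) * pois t i = t := by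
  rw [Summable.tsum_eq_zero_add (summable_mul_pois t)]
  simp only [Nat.cast_zero, zero_mul, zero_add]
  refine Eq.trans (tsum_congr fun i => ?_) (by rw [tsum_mul_left, tsum_pois, mul_one] :
    ∑' i : ℕ, t * pois t i = t)
  unfold pois
  rw [Nat.factorial_succ]
  push_cast
  field_simp
  ring

lemma pois_conv {t p : ℝ} (m : ℕ) :
    pois (t+p) m = ∑ j ∈ range (m+1), pois t (m-j) * pois p j := by
  have key : ∀ j ∈ range (m+1), pois t (m-j) * pois p j
      = (m.choose j : ℝ) * (t^(m-j) * p^j) * Real.exp (-(t+p)) / m.factorial := by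
    intro j hj
    rw [mem_range, Nat.lt_succ_iff] at hj
    have h' : (m.choose j : ℝ) * j.factorial * (m-j).factorial = m.factorial := by
      exact_mod_cast Nat.choose_mul_factorial_mul_factorial hj
    unfold pois
    rw [neg_add, Real.exp_add, ← h']
    have h1 : (j.factorial : ℝ) ≠ 0 := by exact_mod_cast j.factorial_ne_zero
    have h2 : ((m-j).factorial : ℝ) ≠ 0 := by exact_mod_cast (m-j).factorial_ne_zero
    have h3 : (m.choose j : ℝ) ≠ 0 := by
      exact_mod_cast (Nat.choose_pos hj).ne'
    field_simp
  rw [Finset.sum_congr rfl key]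
  have hb : (t+p)^m = ∑ j ∈ range (m+1), p^j * t^(m-j) * m.choose j := by
    rw [show t+p = p+t by ring, add_pow]
  unfold pois
  rw [hb, Finset.sum_mul, Finset.sum_div]
  exact Finset.sum_congr rfl fun j hj => by ring


lemma frac_mono {c u v : ℝ} (hc : 0 ≤ c) (h0 : 0 < u) (h : u ≤ v) : c/v ≤ c/u := by
  gcongr

lemma frac_chord {c a u : ℝ} (hc : 0 ≤ c) (hau : 0 < a + u) (j : ℕ) :
    c/(a+u) + j*(c/(a+u+1) - c/(a+u)) ≤ c/(a+u+(j:ℝ)) := by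
  have h2 : (0:ℝ) < a+u+1 := by linarith
  have h3 : (0:ℝ) < a+u+(j:ℝ) := by
    have := Nat.cast_nonneg (α := ℝ) j; linarith
  have hj : 0 ≤ (j:ℝ)*((j:ℝ)-1) := by
    rcases j with _ | j
    · simp
    · push_cast; nlinarith [Nat.cast_nonneg (α := ℝ) j]
  have key : c/(a+u+(j:ℝ)) - (c/(a+u) + j*(c/(a+u+1) - c/(a+u)))
      = c*((j:ℝ)*((j:ℝ)-1))/((a+u)*(a+u+1)*(a+u+(j:ℝ))) := by
    field_simp
    ring
  have hpos : 0 ≤ c*((j:ℝ)*((j:ℝ)-1))/((a+u)*(a+u+1)*(a+u+(j:ℝ))) :=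
    div_nonneg (mul_nonneg hc hj) (by positivity)
  linarith [key ▸ hpos]

noncomputable def Pf (c a t x : ℝ) : ℝ := ∑' i : ℕ, pois t i * (c / (a + x + i))

section PfLemmas
variable {c a t x p : ℝ} (hc : 0 ≤ c) (ha : 0 < a) (ht : 0 ≤ t) (hx : 0 ≤ x)

include hc ha hx in
lemma frac_nonneg' (i : ℕ) : 0 ≤ c / (a + x + (i:ℝ)) := by
  have := Nat.cast_nonneg (α := ℝ) i; positivity

include hc ha hx in
lemma frac_le' (i : ℕ) : c / (a + x + (i:ℝ)) ≤ c / a :=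
  frac_mono hc ha (by have := Nat.cast_nonneg (α := ℝ) i; linarith)

include hc ha ht hx in
lemma summable_Pf : Summable (fun i : ℕ => pois t i * (c/(a+x+(i:ℝ)))) := by
  refine Summable.of_nonneg_of_le
    (fun i => mul_nonneg (pois_nonneg ht i) (frac_nonneg' hc ha hx i))
    (fun i => mul_le_mul_of_nonneg_left (frac_le' hc ha hx i) (pois_nonneg ht i))
    ((summable_pois t).mul_right (c/a))

include hc ha ht hx in
lemma Pf_nonneg : 0 ≤ Pf c a t x :=
  tsum_nonneg fun i => mul_nonneg (pois_nonneg ht i) (frac_nonneg' hc ha hx i)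

include hc ha ht hx in
lemma Pf_le : Pf c a t x ≤ c / a := by
  have h1 : Pf c a t x ≤ ∑' i : ℕ, pois t i * (c/a) :=
    Summable.tsum_le_tsum (fun i => mul_le_mul_of_nonneg_left (frac_le' hc ha hx i) (pois_nonneg ht i))
      (summable_Pf hc ha ht hx) ((summable_pois t).mul_right (c/a))
  rwa [tsum_mul_right, tsum_pois, one_mul] at h1

lemma Pf_zero : Pf c a 0 x = c / (a + x) := by
  unfold Pf
  rw [tsum_eq_single 0 (fun i hi => ?_)]
  · simp [pois]
  · simp [pois, zero_pow hi]

include hc ha ht hx in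
lemma Pf_chord (j : ℕ) :
    Pf c a t x + j * (Pf c a t (x+1) - Pf c a t x) ≤ Pf c a t (x + (j:ℝ)) := by
  have hS0 := summable_Pf hc ha ht hx
  have hS1 := summable_Pf hc ha ht (x := x+1) (by linarith)
  have hSj := summable_Pf hc ha ht (x := x + (j:ℝ))
    (by have := Nat.cast_nonneg (α := ℝ) j; linarith)
  have hL : Pf c a t x + j * (Pf c a t (x+1) - Pf c a t x)
      = ∑' i : ℕ, (pois t i * (c/(a+x+i))
          + (j:ℝ) * (pois t i * (c/(a+(x+1)+i)) - pois t i * (c/(a+x+i)))) := by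
    rw [Summable.tsum_add hS0 (Summable.mul_left _ (hS1.sub hS0)), tsum_mul_left,
      Summable.tsum_sub hS1 hS0]
    rfl
  rw [hL]
  refine Summable.tsum_le_tsum (fun i => ?_)
    (hS0.add (Summable.mul_left _ (hS1.sub hS0))) hSj
  have h1 : a + (x + (j:ℝ)) + (i:ℝ) = a + (x + (i:ℝ)) + (j:ℝ) := by ring
  have h2 : a + (x+1) + (i:ℝ) = a + (x + (i:ℝ)) + 1 := by ring
  have h3 : a + x + (i:ℝ) = a + (x + (i:ℝ)) := by ring
  rw [h1, h2, h3]
  have hau : 0 < a + (x + (i:ℝ)) := by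
    have := Nat.cast_nonneg (α := ℝ) i; linarith
  have := frac_chord hc hau j
  have hpn := pois_nonneg ht i
  nlinarith [this, hpn, mul_le_mul_of_nonneg_left this hpn]

end PfLemmas


section
variable {c a t x p : ℝ}

lemma Pf_conv (hc : 0 ≤ c) (ha : 0 < a) (ht : 0 ≤ t) (hp : 0 ≤ p) (hx : 0 ≤ x) :
    Pf c a (t+p) x = ∑' j : ℕ, pois p j * Pf c a t (x + (j:ℝ)) := by
  classical
  set F : ℕ → ℕ → ℝ := fun m j =>
    if j ≤ m then pois t (m-j) * pois p j * (c/(a+x+(m:ℝ))) else 0 with hF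
  have hinj : Function.Injective (fun q : ℕ × ℕ => (q.1 + q.2, q.2)) := by
    rintro ⟨i, j⟩ ⟨i', j'⟩ h
    simp only [Prod.mk.injEq] at h
    obtain ⟨h1, h2⟩ := h
    subst h2
    simp only [Prod.mk.injEq]
    exact ⟨by omega, trivial⟩
  have hFcomp : ∀ q : ℕ × ℕ, Function.uncurry F ((fun q : ℕ × ℕ => (q.1 + q.2, q.2)) q)
      = pois t q.1 * pois p q.2 * (c/(a+x+((q.1 + q.2 : ℕ):ℝ))) := by
    rintro ⟨i, j⟩
    simp [Function.uncurry, hF, Nat.le_add_left]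
  have hsupp : ∀ q : ℕ × ℕ, q ∉ Set.range (fun q : ℕ × ℕ => (q.1 + q.2, q.2)) →
      Function.uncurry F q = 0 := by
    rintro ⟨m, j⟩ hq
    have : ¬ j ≤ m := by
      intro hle
      exact hq ⟨(m - j, j), by simp [Nat.sub_add_cancel hle]⟩
    simp [Function.uncurry, hF, this]
  have hbase : Summable (fun q : ℕ × ℕ => pois t q.1 * pois p q.2 * (c/a)) :=
    ((summable_pois t).mul_of_nonneg (summable_pois p) (pois_nonneg ht)
      (pois_nonneg hp)).mul_right (c/a)
  have hcompS : Summable (fun q : ℕ × ℕ =>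
      pois t q.1 * pois p q.2 * (c/(a+x+((q.1 + q.2 : ℕ):ℝ)))) := by
    refine Summable.of_nonneg_of_le (fun q => ?_) (fun q => ?_) hbase
    · exact mul_nonneg (mul_nonneg (pois_nonneg ht _) (pois_nonneg hp _))
        (frac_nonneg' hc ha hx _)
    · exact mul_le_mul_of_nonneg_left (frac_le' hc ha hx _)
        (mul_nonneg (pois_nonneg ht _) (pois_nonneg hp _))
  have hFS : Summable (Function.uncurry F) := by
    rw [← Function.Injective.summable_iff hinj hsupp]
    exact hcompS.congr fun q => (hFcomp q).symm
  have hrow : ∀ m, Summable (F m) := fun m =>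
    summable_of_ne_finset_zero (s := range (m+1)) fun j hj => by
      have hjm : ¬ j ≤ m := by simp only [mem_range] at hj; omega
      simp [hF, hjm]
  have e1 : ∀ j i : ℕ, F (i + j) j = pois t i * (pois p j * (c/(a+x+((i+j : ℕ):ℝ)))) := by
    intro j i
    simp only [hF, Nat.le_add_left, if_pos, Nat.add_sub_cancel]
    ring
  have hsupp2 : ∀ j : ℕ, ∀ m ∉ Set.range (fun i : ℕ => i + j), F m j = 0 := by
    intro j m hm
    have : ¬ j ≤ m := fun hle => hm ⟨m - j, Nat.sub_add_cancel hle⟩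
    simp [hF, this]
  have hcol : ∀ j, Summable (fun m => F m j) := by
    intro j
    have hs : Summable (fun i : ℕ => F (i + j) j) := by
      refine Summable.of_nonneg_of_le (fun i => ?_) (fun i => ?_)
        ((summable_pois t).mul_right (pois p j * (c/a)))
      · rw [e1 j i]
        exact mul_nonneg (pois_nonneg ht _)
          (mul_nonneg (pois_nonneg hp _) (frac_nonneg' hc ha hx _))
      · rw [e1 j i]
        exact mul_le_mul_of_nonneg_left
          (mul_le_mul_of_nonneg_left (frac_le' hc ha hx _) (pois_nonneg hp _))
          (pois_nonneg ht _)
    exact (Function.Injective.summable_iff (add_left_injective j) (hsupp2 j)).mp hs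
  have step1 : Pf c a (t+p) x = ∑' m : ℕ, ∑' j : ℕ, F m j := by
    unfold Pf
    refine tsum_congr fun m => ?_
    rw [pois_conv m, Finset.sum_mul]
    rw [tsum_eq_sum (s := range (m+1)) (fun j hj => by
      have hjm : ¬ j ≤ m := by simp only [mem_range] at hj; omega
      simp [hF, hjm])]
    refine Finset.sum_congr rfl fun j hj => ?_
    rw [mem_range, Nat.lt_succ_iff] at hj
    simp [hF, hj]
  have step2 : ∑' m : ℕ, ∑' j : ℕ, F m j = ∑' j : ℕ, ∑' m : ℕ, F m j :=
    (Summable.tsum_comm' hFS hrow hcol).symm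
  have step3 : ∀ j : ℕ, ∑' m : ℕ, F m j = pois p j * Pf c a t (x + (j:ℝ)) := by
    intro j
    rw [← Function.Injective.tsum_eq (add_left_injective j) (f := fun m => F m j)
      (by simpa [Function.support_subset_iff] using
        fun m hm => not_imp_not.mpr (hsupp2 j m) hm)]
    have e2 : (fun i : ℕ => F (i + j) j)
        = fun i : ℕ => pois p j * (pois t i * (c/(a+(x+(j:ℝ))+(i:ℝ)))) := by
      funext i
      rw [e1 j i]
      have : a + x + ((i+j : ℕ):ℝ) = a + (x + (j:ℝ)) + (i:ℝ) := by push_cast; ring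
      rw [this]; ring
    rw [show ∑' i : ℕ, F (i + j) j
        = ∑' i : ℕ, pois p j * (pois t i * (c/(a+(x+(j:ℝ))+(i:ℝ)))) from by rw [e2]]
    rw [tsum_mul_left]
    rfl
  rw [step1, step2]
  exact tsum_congr step3

lemma Pf_step (hc : 0 ≤ c) (ha : 0 < a) (ht : 0 ≤ t) (hx : 0 ≤ x)
    (hp0 : 0 ≤ p) (hp1 : p ≤ 1) :
    (1-p) * Pf c a t x + p * Pf c a t (x+1) ≤ Pf c a (t+p) x := by
  rw [Pf_conv hc ha ht hp0 hx]
  set Δ : ℝ := Pf c a t (x+1) - Pf c a t x with hΔ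
  have hx1 : (0:ℝ) ≤ x + 1 := by linarith
  have hSL : Summable (fun j : ℕ => pois p j * Pf c a t x + ((j:ℝ) * pois p j) * Δ) :=
    ((summable_pois p).mul_right _).add ((summable_mul_pois p).mul_right _)
  have hSR : Summable (fun j : ℕ => pois p j * Pf c a t (x + (j:ℝ))) := by
    refine Summable.of_nonneg_of_le (fun j => ?_) (fun j => ?_)
      ((summable_pois p).mul_right (c/a))
    · exact mul_nonneg (pois_nonneg hp0 _)
        (Pf_nonneg hc ha ht (by have := Nat.cast_nonneg (α := ℝ) j; linarith))
    · exact mul_le_mul_of_nonneg_left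
        (Pf_le hc ha ht (by have := Nat.cast_nonneg (α := ℝ) j; linarith))
        (pois_nonneg hp0 _)
  have key : ∑' j : ℕ, (pois p j * Pf c a t x + ((j:ℝ) * pois p j) * Δ)
      ≤ ∑' j : ℕ, pois p j * Pf c a t (x + (j:ℝ)) := by
    refine Summable.tsum_le_tsum (fun j => ?_) hSL hSR
    have h1 : pois p j * Pf c a t x + ((j:ℝ) * pois p j) * Δ
        = pois p j * (Pf c a t x + j * (Pf c a t (x+1) - Pf c a t x)) := by rw [hΔ]; ring
    rw [h1]
    exact mul_le_mul_of_nonneg_left (Pf_chord hc ha ht hx j) (pois_nonneg hp0 j)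
  have lhs_eq : ∑' j : ℕ, (pois p j * Pf c a t x + ((j:ℝ) * pois p j) * Δ)
      = (1-p) * Pf c a t x + p * Pf c a t (x+1) := by
    rw [Summable.tsum_add ((summable_pois p).mul_right _) ((summable_mul_pois p).mul_right _),
      tsum_mul_right, tsum_mul_right, tsum_pois, tsum_mul_pois]
    rw [hΔ]; ring
  linarith [lhs_eq ▸ key]
end


lemma bern_induction {α : Type*} [DecidableEq α] (Φ : ℝ → ℝ → ℝ)
    (hstep : ∀ t x p', 0 ≤ t → 0 ≤ x → 0 ≤ p' → p' ≤ 1 →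
      (1-p') * Φ t x + p' * Φ t (x+1) ≤ Φ (t+p') x)
    (q : α → ℝ) :
    ∀ (s : Finset α), (∀ i ∈ s, q i ∈ Set.Icc (0:ℝ) 1) → ∀ t : ℝ, 0 ≤ t →
      ∑ T ∈ s.powerset, (∏ i ∈ T, q i) * (∏ i ∈ s \ T, (1 - q i)) * Φ t (T.card)
        ≤ Φ (t + ∑ i ∈ s, q i) 0 := by
  intro s
  induction s using Finset.induction_on with
  | empty => intro _ t ht; simp
  | @insert a s' ha ih =>
    intro hq t ht
    have hqa := hq a (mem_insert_self a s')
    have hq' : ∀ i ∈ s', q i ∈ Set.Icc (0:ℝ) 1 :=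
      fun i hi => hq i (mem_insert_of_mem hi)
    rw [Finset.sum_powerset_insert ha]
    have wgt_nonneg : ∀ T ∈ s'.powerset,
        0 ≤ (∏ i ∈ T, q i) * (∏ i ∈ s' \ T, (1 - q i)) := by
      intro T hT
      rw [mem_powerset] at hT
      refine mul_nonneg (prod_nonneg fun i hi => (hq' i (hT hi)).1)
        (prod_nonneg fun i hi => ?_)
      have := (hq' i (mem_sdiff.mp hi).1).2
      linarith
    have key1 : ∀ T ∈ s'.powerset,
        (∏ i ∈ T, q i) * (∏ i ∈ insert a s' \ T, (1 - q i)) * Φ t (T.card)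
        = (∏ i ∈ T, q i) * (∏ i ∈ s' \ T, (1 - q i)) * ((1 - q a) * Φ t (T.card)) := by
      intro T hT
      rw [mem_powerset] at hT
      have haT : a ∉ T := fun h => ha (hT h)
      have hset : insert a s' \ T = insert a (s' \ T) := by
        ext i
        simp only [mem_sdiff, mem_insert]
        constructor
        · rintro ⟨h1 | h1, h2⟩
          · exact Or.inl h1
          · exact Or.inr ⟨h1, h2⟩
        · rintro (rfl | ⟨h1, h2⟩)
          · exact ⟨Or.inl rfl, haT⟩
          · exact ⟨Or.inr h1, h2⟩
      have haS : a ∉ s' \ T := fun h => ha (mem_sdiff.mp h).1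
      rw [hset, Finset.prod_insert haS]
      ring
    have key2 : ∀ T ∈ s'.powerset,
        (∏ i ∈ insert a T, q i) * (∏ i ∈ insert a s' \ insert a T, (1 - q i))
            * Φ t ((insert a T).card)
        = (∏ i ∈ T, q i) * (∏ i ∈ s' \ T, (1 - q i)) * (q a * Φ t (T.card + 1)) := by
      intro T hT
      rw [mem_powerset] at hT
      have haT : a ∉ T := fun h => ha (hT h)
      have hset : insert a s' \ insert a T = s' \ T := by
        ext i
        simp only [mem_sdiff, mem_insert]
        constructor
        · rintro ⟨h1 | h1, h2⟩
          · exact absurd (Or.inl h1) h2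
          · exact ⟨h1, fun h => h2 (Or.inr h)⟩
        · rintro ⟨h1, h2⟩
          refine ⟨Or.inr h1, ?_⟩
          rintro (rfl | h)
          · exact ha h1
          · exact h2 h
      rw [hset, Finset.prod_insert haT, Finset.card_insert_of_notMem haT]
      push_cast
      ring
    rw [Finset.sum_congr rfl key1, Finset.sum_congr rfl key2, ← Finset.sum_add_distrib]
    have hle1 : ∑ T ∈ s'.powerset,
        ((∏ i ∈ T, q i) * (∏ i ∈ s' \ T, (1 - q i)) * ((1 - q a) * Φ t (T.card))
          + (∏ i ∈ T, q i) * (∏ i ∈ s' \ T, (1 - q i)) * (q a * Φ t (T.card + 1)))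
        ≤ ∑ T ∈ s'.powerset,
          (∏ i ∈ T, q i) * (∏ i ∈ s' \ T, (1 - q i)) * Φ (t + q a) (T.card) := by
      refine Finset.sum_le_sum fun T hT => ?_
      have h := hstep t T.card (q a) ht (Nat.cast_nonneg _) hqa.1 hqa.2
      calc (∏ i ∈ T, q i) * (∏ i ∈ s' \ T, (1 - q i)) * ((1 - q a) * Φ t (T.card))
            + (∏ i ∈ T, q i) * (∏ i ∈ s' \ T, (1 - q i)) * (q a * Φ t (T.card + 1))
          = (∏ i ∈ T, q i) * (∏ i ∈ s' \ T, (1 - q i))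
              * ((1 - q a) * Φ t (T.card) + q a * Φ t (T.card + 1)) := by ring
        _ ≤ (∏ i ∈ T, q i) * (∏ i ∈ s' \ T, (1 - q i)) * Φ (t + q a) (T.card) :=
            mul_le_mul_of_nonneg_left h (wgt_nonneg T hT)
    refine le_trans hle1 ?_
    have hta : 0 ≤ t + q a := by linarith [hqa.1]
    have h2 := ih hq' (t + q a) hta
    rw [Finset.sum_insert ha]
    have : t + q a + ∑ i ∈ s', q i = t + (q a + ∑ i ∈ s', q i) := by ring
    rw [← this]
    exact h2

lemma g_step (A : ℝ) (hA : 0 < A) :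
    ∀ t x p', 0 ≤ t → 0 ≤ x → 0 ≤ p' → p' ≤ 1 →
      (1-p') * (2*(x+t)/(A+(x+t))) + p' * (2*(x+1+t)/(A+(x+1+t)))
        ≤ 2*(x+(t+p'))/(A+(x+(t+p'))) := by
  intro t x p ht hx hp0 hp1
  set y := x + t with hy
  have hy0 : 0 ≤ y := by positivity
  have hD1 : 0 < A + y := by linarith
  have hD2 : 0 < A + y + 1 := by linarith
  have hD3 : 0 < A + y + p := by linarith
  have e1 : x + 1 + t = y + 1 := by rw [hy]; ring
  have e2 : x + (t + p) = y + p := by rw [hy]; ring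
  have e3 : A + (y+1) = A + y + 1 := by ring
  have e4 : A + (y+p) = A + y + p := by ring
  rw [e1, e2, e3, e4]
  have key : 2*(y+p)/(A+y+p) - ((1-p) * (2*y/(A+y)) + p * (2*(y+1)/(A+y+1)))
      = 2*A*(p*(1-p))/((A+y)*(A+y+1)*(A+y+p)) := by
    field_simp
    ring
  have hpos : 0 ≤ 2*A*(p*(1-p))/((A+y)*(A+y+1)*(A+y+p)) := by
    have h1 : 0 ≤ p*(1-p) := mul_nonneg hp0 (by linarith)
    positivity
  linarith [key ▸ hpos]


/-- Lemma 3 (upper bound on the ideal Dice confidence): for independent Bernoulli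
`Y i ~ Bernoulli(p i)`, `W₁ = ∑_{j<k} Y j`, `W₀ = ∑_{j≥k} Y j`,
`E[2W₁/(k+W₁+W₀)] ≤ ∑_{i≥0} (λ^i e^{-λ}/i!) · 2kμ/(k+kμ+i)`. -/
theorem idc_upper_bound
    (n k : ℕ) (hk1 : 1 ≤ k) (hkn : k ≤ n) (p : Fin n → ℝ)
    (hp : ∀ i, p i ∈ Set.Icc (0:ℝ) 1) (μ lam : ℝ)
    (hμ : μ = (1/(k:ℝ)) * ∑ i ∈ Finset.univ.filter (fun i : Fin n => (i:ℕ) < k), p i)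
    (hlam : lam = ∑ i ∈ Finset.univ.filter (fun i : Fin n => k ≤ (i:ℕ)), p i) :
    ∑ y : Fin n → Bool,
        (∏ i, (if y i then p i else 1 - p i)) *
          (2 * (∑ j ∈ Finset.univ.filter (fun j : Fin n => (j:ℕ) < k ∧ y j = true), (1:ℝ)) /
            ((k:ℝ) + (∑ j ∈ Finset.univ.filter (fun j : Fin n => (j:ℕ) < k ∧ y j = true), (1:ℝ))
              + (∑ j ∈ Finset.univ.filter (fun j : Fin n => k ≤ (j:ℕ) ∧ y j = true), (1:ℝ))))
      ≤ ∑' i : ℕ, lam^i * Real.exp (-lam) / (Nat.factorial i) *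
          (2*(k:ℝ)*μ / ((k:ℝ) + (k:ℝ)*μ + i)) := by
  classical
  set L : Finset (Fin n) := univ.filter (fun i : Fin n => (i:ℕ) < k) with hLdef
  set Hs : Finset (Fin n) := univ.filter (fun i : Fin n => k ≤ (i:ℕ)) with hHdef
  set M : ℝ := ∑ i ∈ L, p i with hMdef
  have hk0 : (0:ℝ) < k := by exact_mod_cast hk1
  have hM0 : 0 ≤ M := sum_nonneg fun i _ => (hp i).1
  have hlam0 : 0 ≤ lam := hlam ▸ sum_nonneg fun i _ => (hp i).1
  have hkμ : (k:ℝ) * μ = M := by rw [hμ]; field_simp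
  set c : ℝ := 2 * M with hcdef
  set a : ℝ := (k:ℝ) + M with hadef
  have hc : 0 ≤ c := by rw [hcdef]; linarith
  have ha : 0 < a := by rw [hadef]; linarith
  have hLH_disj : Disjoint L Hs := by
    rw [Finset.disjoint_left]
    intro i hi1 hi2
    rw [hLdef, mem_filter] at hi1
    rw [hHdef, mem_filter] at hi2
    omega
  have hLH_union : L ∪ Hs = univ := by
    ext i
    simp only [hLdef, hHdef, mem_union, mem_filter, mem_univ, true_and, iff_true]
    omega
  -- per-T decompositions
  have hT_split : ∀ T : Finset (Fin n), (L ∩ T) ∪ (Hs ∩ T) = T := by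
    intro T
    ext i
    have hiu : i ∈ L ∪ Hs := hLH_union ▸ mem_univ i
    rw [mem_union] at hiu
    simp only [mem_union, mem_inter]
    tauto
  have hTc_split : ∀ T : Finset (Fin n), univ \ T = (L \ T) ∪ (Hs \ T) := by
    intro T
    rw [← Finset.union_sdiff_distrib, hLH_union]
  have hdisj1 : ∀ T : Finset (Fin n), Disjoint (L ∩ T) (Hs ∩ T) :=
    fun T => (hLH_disj.mono Finset.inter_subset_left Finset.inter_subset_left)
  have hdisj2 : ∀ T : Finset (Fin n), Disjoint (L \ T) (Hs \ T) :=
    fun T => (hLH_disj.mono (Finset.sdiff_subset) (Finset.sdiff_subset))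
  -- Step a : rewrite the boolean sum as a sum over finsets
  have step_a : ∑ y : Fin n → Bool,
        (∏ i, (if y i then p i else 1 - p i)) *
          (2 * (∑ j ∈ Finset.univ.filter (fun j : Fin n => (j:ℕ) < k ∧ y j = true), (1:ℝ)) /
            ((k:ℝ) + (∑ j ∈ Finset.univ.filter (fun j : Fin n => (j:ℕ) < k ∧ y j = true), (1:ℝ))
              + (∑ j ∈ Finset.univ.filter (fun j : Fin n => k ≤ (j:ℕ) ∧ y j = true), (1:ℝ))))
      = ∑ T : Finset (Fin n),
          ((∏ i ∈ L ∩ T, p i) * (∏ i ∈ L \ T, (1 - p i))) *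
            (((∏ i ∈ Hs ∩ T, p i) * (∏ i ∈ Hs \ T, (1 - p i))) *
              (2 * ((L ∩ T).card : ℝ) /
                ((k:ℝ) + ((L ∩ T).card : ℝ) + ((Hs ∩ T).card : ℝ)))) := by
    refine Fintype.sum_bijective (fun y : Fin n → Bool => univ.filter fun i => y i = true)
      ⟨?_, ?_⟩ _ _ ?_
    · intro y y' h
      funext i
      have h2 := Finset.ext_iff.mp h i
      simp only [mem_filter, mem_univ, true_and] at h2
      cases hy : y i <;> cases hy' : y' i <;> simp_all
    · intro T
      refine ⟨fun i => decide (i ∈ T), ?_⟩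
      ext i
      simp
    · intro y
      set T : Finset (Fin n) := univ.filter fun i => y i = true with hTdef
      have hw : (∏ i, (if y i then p i else 1 - p i))
          = ((∏ i ∈ L ∩ T, p i) * (∏ i ∈ L \ T, (1 - p i))) *
            ((∏ i ∈ Hs ∩ T, p i) * (∏ i ∈ Hs \ T, (1 - p i))) := by
        rw [← Finset.prod_filter_mul_prod_filter_not univ (fun i => y i = true)
          (fun i => if y i then p i else 1 - p i)]
        have e1 : ∏ i ∈ univ.filter (fun i => y i = true),
            (if y i then p i else 1 - p i) = ∏ i ∈ T, p i :=
          Finset.prod_congr rfl fun i hi => by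
            rw [mem_filter] at hi; simp [hi.2]
        have e2 : ∏ i ∈ univ.filter (fun i => ¬ y i = true),
            (if y i then p i else 1 - p i) = ∏ i ∈ univ \ T, (1 - p i) := by
          rw [Finset.filter_not]
          refine Finset.prod_congr rfl fun i hi => ?_
          rw [Finset.mem_sdiff, hTdef, mem_filter] at hi
          have : y i = false := by
            cases hy : y i
            · rfl
            · exact absurd ⟨mem_univ i, hy⟩ hi.2
          simp [this]
        rw [e1, e2]
        have hsp : (∏ i ∈ T, p i) = (∏ i ∈ L ∩ T, p i) * (∏ i ∈ Hs ∩ T, p i) := by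
          rw [← Finset.prod_union (hdisj1 T), hT_split T]
        rw [hsp, hTc_split T, Finset.prod_union (hdisj2 T)]
        ring
      have hcount1 : univ.filter (fun j : Fin n => (j:ℕ) < k ∧ y j = true) = L ∩ T := by
        rw [Finset.filter_and]
      have hcount2 : univ.filter (fun j : Fin n => k ≤ (j:ℕ) ∧ y j = true) = Hs ∩ T := by
        rw [Finset.filter_and]
      rw [hcount1, hcount2, hw]
      simp only [Finset.sum_const, nsmul_eq_mul, mul_one]
      ring
  rw [step_a]
  -- Step b : split the finset sum into a double sum
  have step_b : ∑ T : Finset (Fin n),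
          ((∏ i ∈ L ∩ T, p i) * (∏ i ∈ L \ T, (1 - p i))) *
            (((∏ i ∈ Hs ∩ T, p i) * (∏ i ∈ Hs \ T, (1 - p i))) *
              (2 * ((L ∩ T).card : ℝ) /
                ((k:ℝ) + ((L ∩ T).card : ℝ) + ((Hs ∩ T).card : ℝ))))
      = ∑ T₂ ∈ Hs.powerset, ∑ T₁ ∈ L.powerset,
          ((∏ i ∈ T₁, p i) * (∏ i ∈ L \ T₁, (1 - p i))) *
            (((∏ i ∈ T₂, p i) * (∏ i ∈ Hs \ T₂, (1 - p i))) *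
              (2 * (T₁.card : ℝ) / ((k:ℝ) + (T₁.card : ℝ) + (T₂.card : ℝ)))) := by
    have h1 : ∑ T : Finset (Fin n),
          ((∏ i ∈ L ∩ T, p i) * (∏ i ∈ L \ T, (1 - p i))) *
            (((∏ i ∈ Hs ∩ T, p i) * (∏ i ∈ Hs \ T, (1 - p i))) *
              (2 * ((L ∩ T).card : ℝ) /
                ((k:ℝ) + ((L ∩ T).card : ℝ) + ((Hs ∩ T).card : ℝ))))
        = ∑ q ∈ L.powerset ×ˢ Hs.powerset,
            ((∏ i ∈ q.1, p i) * (∏ i ∈ L \ q.1, (1 - p i))) *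
              (((∏ i ∈ q.2, p i) * (∏ i ∈ Hs \ q.2, (1 - p i))) *
                (2 * (q.1.card : ℝ) / ((k:ℝ) + (q.1.card : ℝ) + (q.2.card : ℝ)))) := by
      rw [show (univ : Finset (Finset (Fin n))) = univ.powerset from (Finset.powerset_univ).symm]
      refine Finset.sum_nbij'
        (i := fun T => ((L ∩ T, Hs ∩ T) : Finset (Fin n) × Finset (Fin n)))
        (j := fun q => q.1 ∪ q.2) ?_ ?_ ?_ ?_ ?_
      · intro T _
        rw [Finset.mem_product]
        exact ⟨Finset.mem_powerset.mpr Finset.inter_subset_left,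
          Finset.mem_powerset.mpr Finset.inter_subset_left⟩
      · intro q _
        exact Finset.mem_powerset.mpr (Finset.subset_univ _)
      · intro T _
        exact hT_split T
      · intro q hq
        rw [Finset.mem_product, Finset.mem_powerset, Finset.mem_powerset] at hq
        have h1 : L ∩ (q.1 ∪ q.2) = q.1 := by
          rw [Finset.inter_union_distrib_left,
            Finset.inter_eq_right.mpr hq.1,
            Finset.disjoint_iff_inter_eq_empty.mp (hLH_disj.mono_right hq.2),
            Finset.union_empty]
        have h2 : Hs ∩ (q.1 ∪ q.2) = q.2 := by
          rw [Finset.inter_union_distrib_left,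
            Finset.disjoint_iff_inter_eq_empty.mp (hLH_disj.symm.mono_right hq.1),
            Finset.inter_eq_right.mpr hq.2, Finset.empty_union]
        rw [h1, h2]
      · intro T _
        dsimp only
        rw [Finset.sdiff_inter_self_left L T, Finset.sdiff_inter_self_left Hs T]
    rw [h1, Finset.sum_product_right]
  rw [step_b]
  -- Step c : inner Jensen bound
  have hwH : ∀ T₂ ∈ Hs.powerset, 0 ≤ (∏ i ∈ T₂, p i) * (∏ i ∈ Hs \ T₂, (1 - p i)) := by
    intro T₂ _
    refine mul_nonneg (prod_nonneg fun i _ => (hp i).1) (prod_nonneg fun i _ => ?_)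
    linarith [(hp i).2]
  have inner_bound : ∀ T₂ : Finset (Fin n),
      ∑ T₁ ∈ L.powerset, ((∏ i ∈ T₁, p i) * (∏ i ∈ L \ T₁, (1 - p i))) *
          (2 * (T₁.card : ℝ) / ((k:ℝ) + (T₁.card : ℝ) + (T₂.card : ℝ)))
        ≤ 2 * M / (((k:ℝ) + (T₂.card : ℝ)) + M) := by
    intro T₂
    have hA : (0:ℝ) < (k:ℝ) + (T₂.card : ℝ) := by positivity
    have h := bern_induction
      (Φ := fun t x => 2*(x+t)/(((k:ℝ) + (T₂.card : ℝ))+(x+t)))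
      (g_step _ hA) p L (fun i _ => hp i) 0 le_rfl
    calc ∑ T₁ ∈ L.powerset, ((∏ i ∈ T₁, p i) * (∏ i ∈ L \ T₁, (1 - p i))) *
          (2 * (T₁.card : ℝ) / ((k:ℝ) + (T₁.card : ℝ) + (T₂.card : ℝ)))
        = ∑ T₁ ∈ L.powerset, (∏ i ∈ T₁, p i) * (∏ i ∈ L \ T₁, (1 - p i)) *
            (2*((T₁.card:ℝ)+0)/(((k:ℝ) + (T₂.card : ℝ))+((T₁.card:ℝ)+0))) :=
          Finset.sum_congr rfl fun T₁ _ => by ring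
      _ ≤ 2*((0:ℝ)+(0+M))/(((k:ℝ) + (T₂.card : ℝ))+((0:ℝ)+(0+M))) := h
      _ = 2 * M / (((k:ℝ) + (T₂.card : ℝ)) + M) := by ring
  -- chain: bound inner sums
  have step_c : ∑ T₂ ∈ Hs.powerset, ∑ T₁ ∈ L.powerset,
          ((∏ i ∈ T₁, p i) * (∏ i ∈ L \ T₁, (1 - p i))) *
            (((∏ i ∈ T₂, p i) * (∏ i ∈ Hs \ T₂, (1 - p i))) *
              (2 * (T₁.card : ℝ) / ((k:ℝ) + (T₁.card : ℝ) + (T₂.card : ℝ))))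
      ≤ ∑ T₂ ∈ Hs.powerset, (∏ i ∈ T₂, p i) * (∏ i ∈ Hs \ T₂, (1 - p i)) *
          (c / (a + (T₂.card : ℝ))) := by
    refine Finset.sum_le_sum fun T₂ hT₂ => ?_
    have e : ∑ T₁ ∈ L.powerset,
        ((∏ i ∈ T₁, p i) * (∏ i ∈ L \ T₁, (1 - p i))) *
          (((∏ i ∈ T₂, p i) * (∏ i ∈ Hs \ T₂, (1 - p i))) *
            (2 * (T₁.card : ℝ) / ((k:ℝ) + (T₁.card : ℝ) + (T₂.card : ℝ))))
        = ((∏ i ∈ T₂, p i) * (∏ i ∈ Hs \ T₂, (1 - p i))) *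
          ∑ T₁ ∈ L.powerset, ((∏ i ∈ T₁, p i) * (∏ i ∈ L \ T₁, (1 - p i))) *
            (2 * (T₁.card : ℝ) / ((k:ℝ) + (T₁.card : ℝ) + (T₂.card : ℝ))) := by
      rw [Finset.mul_sum]
      exact Finset.sum_congr rfl fun T₁ _ => by ring
    rw [e]
    calc ((∏ i ∈ T₂, p i) * (∏ i ∈ Hs \ T₂, (1 - p i))) *
          ∑ T₁ ∈ L.powerset, ((∏ i ∈ T₁, p i) * (∏ i ∈ L \ T₁, (1 - p i))) *
            (2 * (T₁.card : ℝ) / ((k:ℝ) + (T₁.card : ℝ) + (T₂.card : ℝ)))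
        ≤ ((∏ i ∈ T₂, p i) * (∏ i ∈ Hs \ T₂, (1 - p i))) *
            (2 * M / (((k:ℝ) + (T₂.card : ℝ)) + M)) :=
          mul_le_mul_of_nonneg_left (inner_bound T₂) (hwH T₂ hT₂)
      _ = (∏ i ∈ T₂, p i) * (∏ i ∈ Hs \ T₂, (1 - p i)) * (c / (a + (T₂.card : ℝ))) := by
          rw [hcdef, hadef]; ring
  refine le_trans step_c ?_
  -- Step d : Poisson bound for the outer sum
  have step_d : ∑ T₂ ∈ Hs.powerset, (∏ i ∈ T₂, p i) * (∏ i ∈ Hs \ T₂, (1 - p i)) *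
          (c / (a + (T₂.card : ℝ)))
      ≤ Pf c a lam 0 := by
    have h := bern_induction (Φ := Pf c a)
      (fun t x p' ht hx hp0 hp1 => Pf_step hc ha ht hx hp0 hp1)
      p Hs (fun i _ => hp i) 0 le_rfl
    rw [show ∑ i ∈ Hs, p i = lam from hlam.symm] at h
    rw [zero_add] at h
    refine le_trans (le_of_eq ?_) h
    refine Finset.sum_congr rfl fun T₂ _ => ?_
    rw [Pf_zero]
  refine le_trans step_d (le_of_eq ?_)
  unfold Pf pois
  refine tsum_congr fun i => ?_
  rw [hcdef, hadef, ← hkμ]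
  ring
end

section
/- Let k ≥ 1, λ ≥ 0, c = k + kμ with μ ∈ [0,1], and let W₁ be a Poisson-binomial variable with parameters p₁,...,p_k and W₁' ~ Binomial(k, μ) where μ = (1/k)Σpᵢ. Then E[W₁/(k + λ + W₁)] ≥ E[W₁'/(k + λ + W₁')]. -/
open MeasureTheory intervalIntegral

/-- Auxiliary integral identity: `∫₀¹ x^(a-1) x^n dx = 1/(a+n)` for `a ≥ 1`. -/
lemma pbr_int_aux (a : ℝ) (ha : 1 ≤ a) (n : ℕ) :
    IntervalIntegrable (fun x : ℝ => x ^ (a-1) * x ^ n) volume 0 1 ∧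
    ∫ x in (0:ℝ)..1, x ^ (a-1) * x ^ n = 1/(a+n) := by
  have hn0 : (0:ℝ) ≤ n := Nat.cast_nonneg n
  have hEq : Set.EqOn (fun x : ℝ => x ^ (a-1) * x ^ n)
      (fun x : ℝ => x ^ (a-1+n)) (Set.uIcc (0:ℝ) 1) := by
    intro x hx
    rw [Set.uIcc_of_le (by norm_num)] at hx
    rcases eq_or_lt_of_le hx.1 with h | h
    · subst h
      simp only
      rcases Nat.eq_zero_or_pos n with hn | hn
      · subst hn
        rcases eq_or_lt_of_le ha with h1 | h1
        · rw [← h1]; norm_num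
        · rw [Real.zero_rpow (by linarith), Real.zero_rpow (by push_cast; linarith)]
          ring
      · have hn1 : (1:ℝ) ≤ n := by exact_mod_cast hn
        rw [zero_pow hn.ne', mul_zero, eq_comm, Real.zero_rpow (by linarith)]
    · simp only
      rw [← Real.rpow_natCast x n, ← Real.rpow_add h]
  constructor
  · exact (intervalIntegrable_rpow' (by linarith)).mul_continuousOn
      (continuous_pow n).continuousOn
  · rw [intervalIntegral.integral_congr hEq,
      integral_rpow (Or.inl (by linarith))]
    rw [Real.one_rpow, Real.zero_rpow (by linarith)]
    have : a - 1 + n + 1 = a + n := by ring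
    rw [this]
    ring

/-- Sum over the Boolean cube of a product factorizes. -/
lemma pbr_cube_sum (k : ℕ) (g : Fin k → Bool → ℝ) :
    ∑ y : Fin k → Bool, ∏ i, g i (y i) = ∏ i, (g i true + g i false) := by
  rw [← Fintype.prod_sum]
  simp

/-- Unweighted AM-GM for a product over `Fin k`. -/
lemma pbr_amgm (k : ℕ) (hk : 0 < k) (z : Fin k → ℝ) (hz : ∀ i, 0 ≤ z i) :
    ∏ i, z i ≤ ((∑ i, z i) / k)^k := by
  have hk0 : ((k:ℝ)) ≠ 0 := by positivity
  have hw : ∑ _i : Fin k, ((k:ℝ)⁻¹) = 1 := by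
    simp [Finset.sum_const]
    exact mul_inv_cancel₀ hk0
  have hAM := Real.geom_mean_le_arith_mean_weighted Finset.univ (fun _ => (k:ℝ)⁻¹) z
      (fun i _ => by positivity) hw (fun i _ => hz i)
  rw [← Finset.mul_sum] at hAM
  rw [Real.finset_prod_rpow _ _ (fun i _ => hz i) _] at hAM
  have hu : 0 ≤ ∏ i, z i := Finset.prod_nonneg fun i _ => hz i
  have h2 := pow_le_pow_left₀ (Real.rpow_nonneg hu _) hAM k
  rw [← Real.rpow_natCast ((∏ i, z i) ^ ((k:ℝ)⁻¹)) k, ← Real.rpow_mul hu,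
    inv_mul_cancel₀ hk0, Real.rpow_one] at h2
  rw [div_eq_inv_mul]
  exact h2

/-- The Poisson-binomial expectation `E[W₁/(k+λ+W₁)]` dominates the binomial one
with the same mean sum. -/
theorem poisson_binomial_ratio_ge_binomial
    (k : ℕ) (hk : 1 ≤ k) (lam : ℝ) (hlam : 0 ≤ lam)
    (p : Fin k → ℝ) (hp : ∀ i, p i ∈ Set.Icc (0:ℝ) 1)
    (μ : ℝ) (hμ : μ = (1/(k:ℝ)) * ∑ i, p i) :
    ∑ y : Fin k → Bool,
        (∏ i, (if y i then p i else 1 - p i)) *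
          ((∑ j ∈ Finset.univ.filter (fun j : Fin k => y j = true), (1:ℝ)) /
            ((k:ℝ) + lam + ∑ j ∈ Finset.univ.filter (fun j : Fin k => y j = true), (1:ℝ)))
      ≥ ∑ i ∈ Finset.range (k+1),
          (k.choose i : ℝ) * μ^i * (1-μ)^(k-i) * ((i:ℝ) / ((k:ℝ) + lam + i)) := by
  classical
  have hkR : (1:ℝ) ≤ (k:ℝ) := by exact_mod_cast hk
  have hk0 : (0:ℝ) < k := by linarith
  set a : ℝ := (k:ℝ) + lam with ha_def
  have ha1 : (1:ℝ) ≤ a := by rw [ha_def]; linarith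
  have ha0 : (0:ℝ) < a := by linarith
  -- counting function
  set c : (Fin k → Bool) → ℕ := fun y => (Finset.univ.filter fun j : Fin k => y j = true).card
    with hc
  have hcount : ∀ y : Fin k → Bool,
      (∑ j ∈ Finset.univ.filter (fun j : Fin k => y j = true), (1:ℝ)) = (c y : ℝ) := by
    intro y; simp [hc]
  simp only [hcount]
  -- basic facts about μ
  have hμk : ∑ i, p i = (k:ℝ) * μ := by rw [hμ]; field_simp
  have hμ0 : 0 ≤ μ := by
    rw [hμ]
    exact mul_nonneg (by positivity) (Finset.sum_nonneg fun i _ => (hp i).1)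
  have hμ1 : μ ≤ 1 := by
    rw [hμ]
    have h2 : ∑ i, p i ≤ (k:ℝ) := by
      calc ∑ i, p i ≤ ∑ _i : Fin k, (1:ℝ) := Finset.sum_le_sum fun i _ => (hp i).2
        _ = k := by simp
    calc (1/(k:ℝ)) * ∑ i, p i ≤ (1/(k:ℝ)) * k :=
          mul_le_mul_of_nonneg_left h2 (by positivity)
      _ = 1 := by field_simp
  -- generating-function identity for the Poisson-binomial
  have hG : ∀ x : ℝ, ∑ y : Fin k → Bool,
      (∏ i, (if y i then p i else 1 - p i)) * x ^ (c y)
      = ∏ i, (p i * x + (1 - p i)) := by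
    intro x
    have h1 : ∀ y : Fin k → Bool,
        (∏ i, (if y i then p i else 1 - p i)) * x ^ (c y)
        = ∏ i, (if y i then p i * x else 1 - p i) := by
      intro y
      have hx : (x:ℝ) ^ (c y) = ∏ i, (if y i = true then x else 1) := by
        rw [hc, ← Finset.prod_const, Finset.prod_filter]
      rw [hx, ← Finset.prod_mul_distrib]
      exact Finset.prod_congr rfl fun i _ => by cases hyi : y i <;> simp [hyi]
    simp only [h1]
    rw [pbr_cube_sum k (fun i b => if b then p i * x else 1 - p i)]
    simp
  have hPsum : ∑ y : Fin k → Bool, (∏ i, (if y i then p i else 1 - p i)) = 1 := by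
    have h := hG 1
    simp only [one_pow, mul_one] at h
    rw [h]
    exact Finset.prod_eq_one fun i _ => by ring
  -- binomial generating identity
  have hH : ∀ x : ℝ, ∑ i ∈ Finset.range (k+1),
      ((k.choose i : ℝ) * μ^i * (1-μ)^(k-i)) * x ^ i = (μ * x + (1 - μ))^k := by
    intro x
    rw [add_pow]
    exact Finset.sum_congr rfl fun i _ => by rw [mul_pow]; ring
  have hwsum : ∑ i ∈ Finset.range (k+1), (k.choose i : ℝ) * μ^i * (1-μ)^(k-i) = 1 := by
    have h := hH 1
    have h2 : μ * 1 + (1 - μ) = 1 := by ring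
    rw [h2, one_pow] at h
    simpa only [one_pow, mul_one] using h
  -- integral representations
  have hTpb : ∑ y : Fin k → Bool,
      (∏ i, (if y i then p i else 1 - p i)) * (1/(a + c y))
      = ∫ x in (0:ℝ)..1, x ^ (a-1) * ∏ i, (p i * x + (1 - p i)) := by
    have h1 : ∀ y : Fin k → Bool,
        (∏ i, (if y i then p i else 1 - p i)) * (1/(a + c y))
        = ∫ x in (0:ℝ)..1,
            (∏ i, (if y i then p i else 1 - p i)) * (x ^ (a-1) * x ^ (c y)) := by
      intro y
      rw [intervalIntegral.integral_const_mul, (pbr_int_aux a ha1 (c y)).2]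
    simp only [h1]
    rw [← intervalIntegral.integral_finset_sum
      (fun y _ => ((pbr_int_aux a ha1 (c y)).1.const_mul _))]
    congr 1
    funext x
    rw [show ∀ P : (Fin k → Bool) → ℝ, (∑ y : Fin k → Bool, P y * (x ^ (a-1) * x ^ (c y)))
        = x ^ (a-1) * ∑ y : Fin k → Bool, P y * x ^ (c y) from fun P => by
      rw [Finset.mul_sum]; exact Finset.sum_congr rfl fun y _ => by ring]
    rw [hG x]
  have hTbin : ∑ i ∈ Finset.range (k+1),
      ((k.choose i : ℝ) * μ^i * (1-μ)^(k-i)) * (1/(a + i))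
      = ∫ x in (0:ℝ)..1, x ^ (a-1) * (μ * x + (1 - μ))^k := by
    have h1 : ∀ i : ℕ,
        ((k.choose i : ℝ) * μ^i * (1-μ)^(k-i)) * (1/(a + i))
        = ∫ x in (0:ℝ)..1,
            ((k.choose i : ℝ) * μ^i * (1-μ)^(k-i)) * (x ^ (a-1) * x ^ i) := by
      intro i
      rw [intervalIntegral.integral_const_mul, (pbr_int_aux a ha1 i).2]
    simp only [h1]
    rw [← intervalIntegral.integral_finset_sum
      (fun i _ => ((pbr_int_aux a ha1 i).1.const_mul _))]
    congr 1
    funext x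
    rw [show (∑ i ∈ Finset.range (k+1),
        ((k.choose i : ℝ) * μ^i * (1-μ)^(k-i)) * (x ^ (a-1) * x ^ i))
        = x ^ (a-1) * ∑ i ∈ Finset.range (k+1),
            ((k.choose i : ℝ) * μ^i * (1-μ)^(k-i)) * x ^ i from by
      rw [Finset.mul_sum]; exact Finset.sum_congr rfl fun i _ => by ring]
    rw [hH x]
  -- pointwise AM-GM comparison
  have hkey : ∀ x ∈ Set.Icc (0:ℝ) 1,
      ∏ i, (p i * x + (1 - p i)) ≤ (μ * x + (1 - μ))^k := by
    intro x hx
    have hz : ∀ i, 0 ≤ p i * x + (1 - p i) := fun i => by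
      have := (hp i).1; have := (hp i).2; have := hx.1; nlinarith
    have hsz : ∑ i, (p i * x + (1 - p i)) = (k:ℝ) * (μ * x + (1 - μ)) := by
      rw [Finset.sum_add_distrib, ← Finset.sum_mul, Finset.sum_sub_distrib,
        Finset.sum_const, Finset.card_univ, Fintype.card_fin, hμk]
      push_cast
      ring
    have h := pbr_amgm k hk (fun i => p i * x + (1 - p i)) hz
    rwa [hsz, mul_comm, mul_div_assoc, div_self (by positivity : (k:ℝ) ≠ 0), mul_one] at h
  -- integrability of both integrands
  have hipb : IntervalIntegrable
      (fun x : ℝ => x ^ (a-1) * ∏ i, (p i * x + (1 - p i))) volume 0 1 :=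
    (intervalIntegrable_rpow' (by linarith)).mul_continuousOn
      (Continuous.continuousOn (continuous_finset_prod Finset.univ fun i _ =>
        (continuous_const.mul continuous_id).add continuous_const))
  have hibin : IntervalIntegrable
      (fun x : ℝ => x ^ (a-1) * (μ * x + (1 - μ))^k) volume 0 1 :=
    (intervalIntegrable_rpow' (by linarith)).mul_continuousOn
      (Continuous.continuousOn
        (((continuous_const.mul continuous_id).add continuous_const).pow k))
  have hmono : (∫ x in (0:ℝ)..1, x ^ (a-1) * ∏ i, (p i * x + (1 - p i)))
      ≤ ∫ x in (0:ℝ)..1, x ^ (a-1) * (μ * x + (1 - μ))^k :=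
    intervalIntegral.integral_mono_on (by norm_num) hipb hibin
      (fun x hx => mul_le_mul_of_nonneg_left (hkey x hx) (Real.rpow_nonneg hx.1 _))
  -- final algebra
  have hL : ∑ y : Fin k → Bool,
      (∏ i, (if y i then p i else 1 - p i)) * ((c y : ℝ)/(a + c y))
      = 1 - a * ∑ y : Fin k → Bool,
          (∏ i, (if y i then p i else 1 - p i)) * (1/(a + c y)) := by
    have step : ∀ y : Fin k → Bool,
        (∏ i, (if y i then p i else 1 - p i)) * ((c y : ℝ)/(a + c y))
        = (∏ i, (if y i then p i else 1 - p i))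
          - a * ((∏ i, (if y i then p i else 1 - p i)) * (1/(a + c y))) := by
      intro y
      have hpos : (0:ℝ) < a + c y := by
        have : (0:ℝ) ≤ c y := Nat.cast_nonneg _
        linarith
      field_simp
      ring
    rw [Finset.sum_congr rfl fun y _ => step y, Finset.sum_sub_distrib, hPsum,
      ← Finset.mul_sum]
  have hR : ∑ i ∈ Finset.range (k+1),
      (k.choose i : ℝ) * μ^i * (1-μ)^(k-i) * ((i:ℝ)/(a + i))
      = 1 - a * ∑ i ∈ Finset.range (k+1),
          ((k.choose i : ℝ) * μ^i * (1-μ)^(k-i)) * (1/(a + i)) := by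
    have step : ∀ i : ℕ,
        (k.choose i : ℝ) * μ^i * (1-μ)^(k-i) * ((i:ℝ)/(a + i))
        = (k.choose i : ℝ) * μ^i * (1-μ)^(k-i)
          - a * (((k.choose i : ℝ) * μ^i * (1-μ)^(k-i)) * (1/(a + i))) := by
      intro i
      have hpos : (0:ℝ) < a + i := by
        have : (0:ℝ) ≤ i := Nat.cast_nonneg _
        linarith
      field_simp
      ring
    rw [Finset.sum_congr rfl fun i _ => step i, Finset.sum_sub_distrib, hwsum,
      ← Finset.mul_sum]
  rw [ge_iff_le, hL, hR, hTpb, hTbin]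
  nlinarith [mul_le_mul_of_nonneg_left hmono ha0.le]
end

section
/- Define SDC(p, ŷ) = 2Σⱼ pⱼŷⱼ / Σⱼ(pⱼ + ŷⱼ) for (p, ŷ) ≠ (0,0) and SDC(0,0) = 0, and define IDC(p, ŷ) = Σ_{y∈{0,1}^n} (∏ᵢ pᵢ^{yᵢ}(1−pᵢ)^{1−yᵢ}) D(y, ŷ), where D is the Dice coefficient with D(0,0) = 0. Then for all p ∈ [0,1]^n and ŷ ∈ {0,1}^n: SDC(p, ŷ) = 0 ⟺ Σᵢ pᵢŷᵢ = 0 ⟺ IDC(p, ŷ) = 0. -/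
/-- The Dice coefficient, with the convention `D(0,0) = 0`. -/
noncomputable def dice {n : ℕ} (y yh : Fin n → Bool) : ℝ :=
  if (∀ j, y j = false) ∧ (∀ j, yh j = false) then 0
  else (2 * ∑ j, (if y j ∧ yh j then (1:ℝ) else 0)) /
    (∑ j, ((if y j then (1:ℝ) else 0) + (if yh j then (1:ℝ) else 0)))

/-- The Soft Dice Confidence, with `SDC(0,0) = 0`. -/
noncomputable def SDC {n : ℕ} (p : Fin n → ℝ) (yh : Fin n → Bool) : ℝ :=
  if (∀ j, p j = 0) ∧ (∀ j, yh j = false) then 0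
  else (2 * ∑ j, p j * (if yh j then (1:ℝ) else 0)) /
    (∑ j, (p j + (if yh j then (1:ℝ) else 0)))

/-- The (marginal-based) Ideal Dice Confidence under conditional independence. -/
noncomputable def IDC {n : ℕ} (p : Fin n → ℝ) (yh : Fin n → Bool) : ℝ :=
  ∑ y : Fin n → Bool, (∏ i, (if y i then p i else 1 - p i)) * dice y yh

lemma dice_nonneg {n : ℕ} (y yh : Fin n → Bool) : 0 ≤ dice y yh := by
  unfold dice
  split
  · exact le_refl _
  · apply div_nonneg
    · have : (0:ℝ) ≤ ∑ j, (if y j ∧ yh j then (1:ℝ) else 0) :=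
        Finset.sum_nonneg (fun j _ => by split <;> norm_num)
      linarith
    · exact Finset.sum_nonneg (fun j _ => by split <;> split <;> norm_num)

lemma weight_nonneg {n : ℕ} (p : Fin n → ℝ) (hp : ∀ i, p i ∈ Set.Icc (0:ℝ) 1)
    (y : Fin n → Bool) : 0 ≤ ∏ i, (if y i then p i else 1 - p i) := by
  apply Finset.prod_nonneg
  intro i _
  have := hp i
  rcases this with ⟨h1, h2⟩
  split <;> linarith

/-- Theorem 1, first statement: `SDC = 0 ⟺ s = 0 ⟺ IDC = 0`. -/
theorem sdc_zero_iff_idc_zero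
    (n : ℕ) (hn : 1 ≤ n) (p : Fin n → ℝ) (hp : ∀ i, p i ∈ Set.Icc (0:ℝ) 1)
    (yh : Fin n → Bool) :
    (SDC p yh = 0 ↔ ∑ i, p i * (if yh i then (1:ℝ) else 0) = 0) ∧
    ((∑ i, p i * (if yh i then (1:ℝ) else 0)) = 0 ↔ IDC p yh = 0) := by
  have hterm : ∀ i : Fin n, 0 ≤ p i * (if yh i then (1:ℝ) else 0) := by
    intro i
    have := (hp i).1
    split <;> nlinarith
  have hdterm : ∀ j ∈ Finset.univ, (0:ℝ) ≤ p j + (if yh j then (1:ℝ) else 0) := by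
    intro j _
    have := (hp j).1; split <;> linarith
  constructor
  · unfold SDC
    split
    · rename_i h
      constructor
      · intro _
        apply Finset.sum_eq_zero
        intro i _; rw [h.1 i]; ring
      · intro _; rfl
    · rename_i h
      have hd : 0 < ∑ j, (p j + (if yh j then (1:ℝ) else 0)) := by
        rcases lt_or_eq_of_le (Finset.sum_nonneg hdterm) with h' | h'
        · exact h'
        · exfalso
          apply h
          have hz := (Finset.sum_eq_zero_iff_of_nonneg hdterm).mp h'.symm
          constructor
          · intro j
            have h1 := hz j (Finset.mem_univ j)
            have h2 := (hp j).1
            by_cases hy : yh j <;> simp [hy] at h1 <;> linarith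
          · intro j
            have h1 := hz j (Finset.mem_univ j)
            have h2 := (hp j).1
            by_cases hy : yh j
            · simp [hy] at h1; linarith
            · exact Bool.eq_false_iff.mpr (fun hc => absurd hc hy)
      rw [div_eq_zero_iff]
      constructor
      · rintro (h2 | h2)
        · linarith
        · exact absurd h2 (ne_of_gt hd)
      · intro hs; left; rw [hs]; ring
  · have hIterm : ∀ y ∈ (Finset.univ : Finset (Fin n → Bool)),
        (0:ℝ) ≤ (∏ i, (if y i then p i else 1 - p i)) * dice y yh :=
      fun y _ => mul_nonneg (weight_nonneg p hp y) (dice_nonneg y yh)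
    constructor
    · intro hs
      have hzero : ∀ i, p i * (if yh i then (1:ℝ) else 0) = 0 :=
        fun i => (Finset.sum_eq_zero_iff_of_nonneg
          (fun i _ => hterm i)).mp hs i (Finset.mem_univ i)
      unfold IDC
      apply Finset.sum_eq_zero
      intro y _
      by_cases hdz : dice y yh = 0
      · rw [hdz, mul_zero]
      · -- dice ≠ 0 : there is j with y j ∧ yh j
        have hnum : ∃ j, y j ∧ yh j := by
          by_contra hno
          push_neg at hno
          apply hdz
          unfold dice
          split
          · rfl
          · have : (∑ j, (if y j ∧ yh j then (1:ℝ) else 0)) = 0 := by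
              apply Finset.sum_eq_zero
              intro j _
              have := hno j
              simp only [if_neg (by tauto : ¬ (y j ∧ yh j))]
            rw [this]; simp
        obtain ⟨j, hyj, hyhj⟩ := hnum
        have hpj : p j = 0 := by
          have := hzero j
          rw [if_pos hyhj] at this
          linarith [this]
        have : (∏ i, (if y i then p i else 1 - p i)) = 0 := by
          apply Finset.prod_eq_zero (Finset.mem_univ j)
          rw [if_pos hyj, hpj]
        rw [this, zero_mul]
    · intro hI
      by_contra hs
      -- s > 0, so some i with yh i true and p i > 0
      have hspos : ∃ i, yh i = true ∧ 0 < p i := by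
        by_contra hno
        push_neg at hno
        apply hs
        apply Finset.sum_eq_zero
        intro i _
        by_cases hy : yh i
        · have := hno i hy
          have := (hp i).1
          have hpi : p i = 0 := le_antisymm (hno i hy) (hp i).1
          rw [hpi]; ring
        · rw [if_neg hy]; ring
      obtain ⟨i, hyi, hpi⟩ := hspos
      set y0 : Fin n → Bool := fun j => decide (0 < p j) with hy0
      have hw : 0 < ∏ j, (if y0 j then p j else 1 - p j) := by
        apply Finset.prod_pos
        intro j _
        by_cases hj : 0 < p j
        · simp [hy0, hj]
        · have : p j = 0 := le_antisymm (not_lt.mp hj) (hp j).1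
          simp [hy0, hj, this]
      have hdpos : 0 < dice y0 yh := by
        unfold dice
        rw [if_neg (by
          rintro ⟨_, h2⟩
          exact absurd (h2 i) (by simp [hyi]))]
        apply div_pos
        · have hle : (1:ℝ) ≤ ∑ j, (if y0 j ∧ yh j then (1:ℝ) else 0) := by
            have h1 := Finset.single_le_sum (f := fun j => (if y0 j ∧ yh j then (1:ℝ) else 0))
              (fun j _ => by split <;> norm_num) (Finset.mem_univ i)
            rwa [if_pos ⟨by simp [hy0, hpi], hyi⟩] at h1
          linarith
        · have hle : (1:ℝ) ≤ ∑ j, ((if y0 j then (1:ℝ) else 0) + (if yh j then (1:ℝ) else 0)) := by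
            have h1 := Finset.single_le_sum
              (f := fun j => ((if y0 j then (1:ℝ) else 0) + (if yh j then (1:ℝ) else 0)))
              (fun j _ => by split <;> split <;> norm_num) (Finset.mem_univ i)
            rw [if_pos (by simp [hy0, hpi] : y0 i = true), if_pos hyi] at h1
            linarith
          linarith
      have hle : (∏ j, (if y0 j then p j else 1 - p j)) * dice y0 yh ≤ IDC p yh := by
        unfold IDC
        exact Finset.single_le_sum hIterm (Finset.mem_univ y0)
      nlinarith [mul_pos hw hdpos]
end
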